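/- q-derivatives of q-Hermite times q-Gaussian: ∂^t(h̃_l(x;q) e_{q²}(-x²)) = ((-1)^t q^{lt + (t²-t)/2}/(1-q)^t) h̃_{l+t}(x;q) e_{q²}(-x²), where h̃_l denotes the discrete q-Hermite II polynomial. -/

import Mathlib

/-!
The q-Gaussian satisfies `e(qx) = (1 + x²) e(x)`, so
`∂(h̃_k e)(x) = (h̃_k(x) - (1 + x²) h̃_k(qx)) e(x) / ((1 - q) x)`. Comparing coefficients in the
explicit sum gives `h̃_k(x) - (1 + x²) h̃_k(qx) = -q^k x h̃_{k+1}(x)`, so `∂` maps `h̃_k e` to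
`-q^k / (1 - q) · h̃_{k+1} e`. Iterating `t` times from `l` multiplies these factors, and
`∏_{i<t} q^(l+i) = q^(lt + t(t-1)/2)`.
-/

open scoped BigOperators

noncomputable section

/-- finite q-Pochhammer symbol `(a;q)_k` -/
def qPoch (q a : ℝ) (k : ℕ) : ℝ := ∏ j ∈ Finset.range k, (1 - a * q ^ j)

/-- infinite q-Pochhammer symbol `(a;q)_∞` -/
def qPochInf (q a : ℝ) : ℝ := ∏' j : ℕ, (1 - a * q ^ j)

/-- q-integral over the lattice `L(γ) = {± q^k γ}` -/
def qInt (q γ : ℝ) (f : ℝ → ℝ) : ℝ :=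
  (1 - q) * ∑' k : ℤ, (q ^ k * γ) * (f (q ^ k * γ) + f (-(q ^ k * γ)))

/-- k-th q-moment -/
def qMoment (q γ : ℝ) (e : ℕ) (f : ℝ → ℝ) : ℝ :=
  q ^ (e * (e + 1) / 2) * qInt q γ (fun x => f x * x ^ e)

/-- k-th strict q-moment -/
def qNu (q γ : ℝ) (e : ℕ) (f : ℝ → ℝ) : ℝ :=
  q ^ (e * (e + 1) / 2) * qInt q γ (fun x => |f x * x ^ e|)

/-- q-derivative -/
def qDeriv (q : ℝ) (f : ℝ → ℝ) : ℝ → ℝ := fun x => (f x - f (q * x)) / ((1 - q) * x)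

/-- q-factorial `[e]_q!` -/
def qFact (q : ℝ) (e : ℕ) : ℝ := qPoch q q e / (1 - q) ^ e

/-- q-binomial coefficient -/
def qBinom (q : ℝ) (n k : ℕ) : ℝ := qPoch q q n / (qPoch q q k * qPoch q q (n - k))

/-- q-convolution -/
def qConv (q γ : ℝ) (f g : ℝ → ℝ) : ℝ → ℝ :=
  fun x => ∑' e : ℕ, (-1) ^ e * qMoment q γ e f / qFact q e * (qDeriv q)^[e] g x

/-- the q-Gaussian `e_{q²}(-x²)` -/
def qGauss (q : ℝ) : ℝ → ℝ := fun x => 1 / qPochInf (q ^ 2) (-(x ^ 2))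

/-- discrete q-Hermite II polynomials -/
def qHermiteII (q : ℝ) (k : ℕ) (x : ℝ) : ℝ :=
  qPoch q q k * ∑ l ∈ Finset.range (k / 2 + 1),
    (-1) ^ l * q ^ (2 * l ^ 2 + l) / q ^ (2 * l * k) * x ^ (k - 2 * l) /
      (qPoch (q ^ 2) (q ^ 2) l * qPoch q q (k - 2 * l))

/-- discrete delta function on the lattice, supported at `η γ q^p` -/
def qdelta (q γ η : ℝ) (p : ℤ) : ℝ → ℝ := fun x => if x = η * γ * q ^ p then 1 else 0

open Finset

lemma qPoch_zero (q a : ℝ) : qPoch q a 0 = 1 := prod_range_zero _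

lemma qPoch_succ (q a : ℝ) (n : ℕ) : qPoch q a (n + 1) = qPoch q a n * (1 - a * q ^ n) :=
  prod_range_succ _ _

section

variable {q : ℝ}

lemma one_sub_mul_pow_ne_zero (hq : |q| < 1) (j : ℕ) : 1 - q * q ^ j ≠ 0 := by
  refine sub_ne_zero.mpr fun h => ?_
  have : |q ^ (j + 1)| < 1 := by rw [abs_pow]; exact pow_lt_one₀ (abs_nonneg q) hq j.succ_ne_zero
  rw [pow_succ', ← h, abs_one] at this
  exact this.false

lemma qPoch_self_ne_zero (hq : |q| < 1) (n : ℕ) : qPoch q q n ≠ 0 :=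
  prod_ne_zero_iff.mpr fun j _ => one_sub_mul_pow_ne_zero hq j

lemma qPochInf_eq_one_sub_mul (hq : |q| < 1) (a : ℝ) :
    qPochInf q a = (1 - a) * qPochInf q (a * q) := by
  have hmul : Multipliable fun j : ℕ => 1 - a * q ^ (j + 1) := by
    have : Summable fun j : ℕ => -(a * q) * q ^ j :=
      (summable_geometric_of_abs_lt_one hq).mul_left _
    exact (Real.multipliable_one_add_of_summable this).congr fun j => by ring
  rw [qPochInf, tprod_eq_zero_mul' (f := fun j => 1 - a * q ^ j) hmul, qPochInf]
  simp only [pow_zero, mul_one, pow_succ', mul_assoc]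

lemma qGauss_mul_left (hq : |q| < 1) (x : ℝ) :
    qGauss q (q * x) = (1 + x ^ 2) * qGauss q x := by
  have hq2 : |q ^ 2| < 1 := by rwa [abs_sq, sq_lt_one_iff_abs_lt_one]
  have hx : 1 + x ^ 2 ≠ 0 := by positivity
  simp only [qGauss, qPochInf_eq_one_sub_mul hq2 (-(x ^ 2)), neg_mul, sub_neg_eq_add, mul_pow]
  field_simp

lemma qDeriv_const_mul (c : ℝ) (f : ℝ → ℝ) (x : ℝ) :
    qDeriv q (fun y => c * f y) x = c * qDeriv q f x := by
  simp only [qDeriv, ← mul_sub, mul_div_assoc]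

lemma qDeriv_congr {f g : ℝ → ℝ} {x : ℝ} (h : f x = g x) (h' : f (q * x) = g (q * x)) :
    qDeriv q f x = qDeriv q g x := by
  simp only [qDeriv, h, h']

lemma iterate_qDeriv_eq_prod_mul {F : ℕ → ℝ → ℝ} {a : ℕ → ℝ} (hq : q ≠ 0)
    (hF : ∀ k x, x ≠ 0 → qDeriv q (F k) x = a k * F (k + 1) x) (l t : ℕ) {x : ℝ} (hx : x ≠ 0) :
    (qDeriv q)^[t] (F l) x = (∏ i ∈ range t, a (l + i)) * F (l + t) x := by
  induction t generalizing x with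
  | zero => simp
  | succ t ih =>
    rw [Function.iterate_succ_apply',
      qDeriv_congr (g := fun y => _ * F (l + t) y) (ih hx) (ih (mul_ne_zero hq hx)),
      qDeriv_const_mul, hF _ _ hx, prod_range_succ, ← add_assoc]
    ring

/-- The coefficient of `x ^ (k - 2 * m)` in `qHermiteII q k x`, set to `0` for `2 * m > k` so
that the expansion may run over any long enough range of `m`. -/
def qHermiteCoeff (q : ℝ) (k m : ℕ) : ℝ :=
  if 2 * m ≤ k then
    qPoch q q k * (-1) ^ m * q ^ (2 * m ^ 2 + m) / q ^ (2 * m * k) /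
      (qPoch (q ^ 2) (q ^ 2) m * qPoch q q (k - 2 * m))
  else 0

lemma qHermiteII_eq_sum (k : ℕ) (x : ℝ) {N : ℕ} (hN : k / 2 < N) :
    qHermiteII q k x = ∑ m ∈ range N, qHermiteCoeff q k m * x ^ (k - 2 * m) := by
  have hsub : range (k / 2 + 1) ⊆ range N := range_subset_range.mpr hN
  rw [qHermiteII, mul_sum, ← sum_subset hsub fun m _ hm => ?_]
  · refine sum_congr rfl fun m hm => ?_
    rw [qHermiteCoeff, if_pos (by simp at hm; omega)]
    ring
  · rw [qHermiteCoeff, if_neg (by simp at hm; omega), zero_mul]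

lemma qHermiteCoeff_zero (hq : |q| < 1) (k : ℕ) : qHermiteCoeff q k 0 = 1 := by
  have := qPoch_self_ne_zero hq k
  simp [qHermiteCoeff, qPoch_zero, this]

lemma qHermiteCoeff_recurrence (hq0 : q ≠ 0) (hq : |q| < 1) (m r : ℕ) :
    q ^ (2 * m + 2 + r) * qHermiteCoeff q (2 * m + 2 + r + 1) (m + 1) =
      qHermiteCoeff q (2 * m + 2 + r) (m + 1) * q ^ r -
        qHermiteCoeff q (2 * m + 2 + r) m * (1 - q ^ (r + 2)) := by
  have hq2 : |q ^ 2| < 1 := by rwa [abs_sq, sq_lt_one_iff_abs_lt_one]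
  have := qPoch_self_ne_zero hq (2 * m + 2 + r)
  have := qPoch_self_ne_zero hq r
  have := qPoch_self_ne_zero hq2 m
  have := one_sub_mul_pow_ne_zero hq (2 * m + 2 + r)
  have := one_sub_mul_pow_ne_zero hq r
  have := one_sub_mul_pow_ne_zero hq (r + 1)
  have := one_sub_mul_pow_ne_zero hq2 m
  simp only [qHermiteCoeff, if_pos (show 2 * (m + 1) ≤ 2 * m + 2 + r + 1 by omega),
    if_pos (show 2 * (m + 1) ≤ 2 * m + 2 + r by omega),
    if_pos (show 2 * m ≤ 2 * m + 2 + r by omega),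
    show 2 * m + 2 + r + 1 - 2 * (m + 1) = r + 1 by omega,
    show 2 * m + 2 + r - 2 * (m + 1) = r by omega, show 2 * m + 2 + r - 2 * m = r + 2 by omega]
  rw [qPoch_succ q q (2 * m + 2 + r), qPoch_succ q q (r + 1), qPoch_succ q q r,
    qPoch_succ (q ^ 2) (q ^ 2) m]
  field_simp
  ring

lemma qHermiteCoeff_recurrence_odd (hq0 : q ≠ 0) (hq : |q| < 1) (m : ℕ) :
    q ^ (2 * m + 1) * qHermiteCoeff q (2 * m + 2) (m + 1) =
      -(qHermiteCoeff q (2 * m + 1) m * (1 - q)) := by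
  have hq2 : |q ^ 2| < 1 := by rwa [abs_sq, sq_lt_one_iff_abs_lt_one]
  have := qPoch_self_ne_zero hq (2 * m + 1)
  have := qPoch_self_ne_zero hq2 m
  have := one_sub_mul_pow_ne_zero hq (2 * m + 1)
  have : 1 - q ≠ 0 := by simpa using one_sub_mul_pow_ne_zero hq 0
  have := one_sub_mul_pow_ne_zero hq2 m
  simp only [qHermiteCoeff, if_pos (show 2 * (m + 1) ≤ 2 * m + 2 by omega),
    if_pos (show 2 * m ≤ 2 * m + 1 by omega),
    show 2 * m + 2 - 2 * (m + 1) = 0 by omega, show 2 * m + 1 - 2 * m = 1 by omega]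
  rw [qPoch_succ q q (2 * m + 1), qPoch_succ (q ^ 2) (q ^ 2) m, qPoch_succ q q 0, qPoch_zero]
  field_simp
  ring

/- The coefficient of `x ^ (k - 2 * m)` in `qHermiteII_sub_one_add_sq_mul`. Where the natural
subtractions in the exponents truncate, the coefficients in front of them vanish. -/
lemma qHermiteCoeff_succ_succ_mul_pow (hq0 : q ≠ 0) (hq : |q| < 1) (k m : ℕ) (x : ℝ) :
    -(q ^ k) * x * (qHermiteCoeff q (k + 1) (m + 1) * x ^ (k + 1 - 2 * (m + 1))) =
      qHermiteCoeff q k m * (x ^ (k - 2 * m) - (q * x) ^ (k - 2 * m)) -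
        x ^ 2 * (qHermiteCoeff q k (m + 1) * (q * x) ^ (k - 2 * (m + 1))) := by
  obtain ⟨r, rfl⟩ | rfl | hk : (∃ r, k = 2 * m + 2 + r) ∨ k = 2 * m + 1 ∨ k ≤ 2 * m := by
    by_cases h : 2 * m + 2 ≤ k
    · exact Or.inl ⟨k - (2 * m + 2), by omega⟩
    · omega
  · rw [show 2 * m + 2 + r + 1 - 2 * (m + 1) = r + 1 by omega,
      show 2 * m + 2 + r - 2 * m = r + 2 by omega, show 2 * m + 2 + r - 2 * (m + 1) = r by omega]
    linear_combination (-x ^ (r + 2)) * qHermiteCoeff_recurrence hq0 hq m r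
  · have hvanish : qHermiteCoeff q (2 * m + 1) (m + 1) = 0 := if_neg (by omega)
    rw [show 2 * m + 1 + 1 - 2 * (m + 1) = 0 by omega, show 2 * m + 1 - 2 * m = 1 by omega,
      hvanish]
    linear_combination (-x) * qHermiteCoeff_recurrence_odd hq0 hq m
  · simp [qHermiteCoeff, show ¬2 * (m + 1) ≤ k + 1 by omega, show ¬2 * (m + 1) ≤ k by omega,
      show k - 2 * m = 0 by omega]

lemma qHermiteII_sub_one_add_sq_mul (hq0 : q ≠ 0) (hq : |q| < 1) (k : ℕ) (x : ℝ) :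
    qHermiteII q k x - (1 + x ^ 2) * qHermiteII q k (q * x) =
      -(q ^ k) * x * qHermiteII q (k + 1) x := by
  calc qHermiteII q k x - (1 + x ^ 2) * qHermiteII q k (q * x)
      = ∑ m ∈ range (k + 1), qHermiteCoeff q k m * (x ^ (k - 2 * m) - (q * x) ^ (k - 2 * m)) -
          x ^ 2 * qHermiteII q k (q * x) := by
        rw [qHermiteII_eq_sum k (q * x) (N := k + 1) (by omega),
          qHermiteII_eq_sum k x (N := k + 1) (by omega)]
        simp only [mul_sub, sum_sub_distrib]
        ring
    _ = ∑ m ∈ range (k + 1), (qHermiteCoeff q k m * (x ^ (k - 2 * m) - (q * x) ^ (k - 2 * m)) -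
          x ^ 2 * (qHermiteCoeff q k (m + 1) * (q * x) ^ (k - 2 * (m + 1)))) -
          x ^ 2 * (qHermiteCoeff q k 0 * (q * x) ^ k) := by
        rw [qHermiteII_eq_sum k (q * x) (N := k + 2) (by omega), sum_range_succ' _ (k + 1),
          sum_sub_distrib, mul_add, mul_sum]
        simp only [mul_zero, Nat.sub_zero]
        ring
    _ = ∑ m ∈ range (k + 1),
          -(q ^ k) * x * (qHermiteCoeff q (k + 1) (m + 1) * x ^ (k + 1 - 2 * (m + 1))) +
          -(q ^ k) * x * (qHermiteCoeff q (k + 1) 0 * x ^ (k + 1)) := by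
        simp only [qHermiteCoeff_succ_succ_mul_pow hq0 hq, qHermiteCoeff_zero hq, mul_pow]
        ring
    _ = -(q ^ k) * x * qHermiteII q (k + 1) x := by
        rw [qHermiteII_eq_sum (k + 1) x (N := k + 2) (by omega), sum_range_succ' _ (k + 1),
          mul_add, mul_sum]
        simp

lemma qDeriv_qHermiteII_mul_qGauss (hq0 : q ≠ 0) (hq : |q| < 1) (k : ℕ) {x : ℝ}
    (hx : x ≠ 0) :
    qDeriv q (fun y => qHermiteII q k y * qGauss q y) x =
      -(q ^ k) / (1 - q) * (qHermiteII q (k + 1) x * qGauss q x) := by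
  have h1q : 1 - q ≠ 0 := by simpa using one_sub_mul_pow_ne_zero hq 0
  have key := congrArg (· * qGauss q x) (qHermiteII_sub_one_add_sq_mul hq0 hq k x)
  simp only [qDeriv, qGauss_mul_left hq]
  field_simp
  linear_combination key

end

lemma prod_range_pow_add (q : ℝ) (l t : ℕ) :
    ∏ i ∈ range t, q ^ (l + i) = q ^ (l * t + t * (t - 1) / 2) := by
  rw [prod_pow_eq_pow_sum, sum_add_distrib, sum_const, card_range, smul_eq_mul, sum_range_id,
    mul_comm t l]

/-- q-derivatives of discrete q-Hermite II polynomials times the q-Gaussian. -/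
theorem stmt13 (q : ℝ) (hq : q ∈ Set.Ioo (0 : ℝ) 1) (l t : ℕ) (x : ℝ) (hx : x ≠ 0) :
    (qDeriv q)^[t] (fun y => qHermiteII q l y * qGauss q y) x =
      (-1) ^ t * q ^ (l * t + t * (t - 1) / 2) / (1 - q) ^ t *
        (qHermiteII q (l + t) x * qGauss q x) := by
  have hq0 : q ≠ 0 := hq.1.ne'
  have hq1 : |q| < 1 := abs_lt.mpr ⟨by linarith [hq.1], hq.2⟩
  rw [iterate_qDeriv_eq_prod_mul (F := fun k y => qHermiteII q k y * qGauss q y) hq0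
    (fun k _ hy => qDeriv_qHermiteII_mul_qGauss hq0 hq1 k hy) l t hx, ← prod_range_pow_add,
    prod_div_distrib, prod_neg, prod_const, card_range]
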